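/- arXiv:1501.02534 — 4 statements merged into one kernel-verified Lean document; each statement's English description precedes it below -/
import Mathlib

section
/- Every subspace-transitive operator is subspace-hypercyclic: if T is a bounded linear operator on a separable Hilbert space H and M is a nontrivial closed subspace of H such that for every pair of nonempty relatively open subsets U₁, U₂ of M there exists n ∈ ℕ with T⁻ⁿ(U₁) ∩ U₂ containing a nonempty relatively open subset of M, then there exists x ∈ H such that Orb(T,x) ∩ M is dense in M. -/
open Filter Finset Topology

noncomputable section

/-- `U` is a nonempty relatively open subset of `M`. -/
def RelOpenIn {H : Type*} [NormedAddCommGroup H] (M U : Set H) : Prop :=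
  U ⊆ M ∧ ∃ W : Set H, IsOpen W ∧ U = W ∩ M

/-- `T` is `M`-transitive: for each pair of nonempty relatively open subsets `U₁, U₂` of `M`
there is `n` such that `T⁻ⁿ U₁ ∩ U₂` contains a nonempty relatively open subset of `M`. -/
def SubspaceTransitive {H : Type*} [NormedAddCommGroup H] [NormedSpace ℂ H]
    (T : H →L[ℂ] H) (M : Set H) : Prop :=
  ∀ U₁ U₂ : Set H, RelOpenIn M U₁ → RelOpenIn M U₂ → U₁.Nonempty → U₂.Nonempty →
    ∃ n : ℕ, ∃ V : Set H, V.Nonempty ∧ RelOpenIn M V ∧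
      V ⊆ (⇑(T ^ n)) ⁻¹' U₁ ∩ U₂

theorem subspace_transitive_implies_hypercyclic
    {H : Type*} [NormedAddCommGroup H] [InnerProductSpace ℂ H] [CompleteSpace H]
    [TopologicalSpace.SeparableSpace H]
    (T : H →L[ℂ] H) (M : Submodule ℂ H) (hMcl : IsClosed (M : Set H))
    (hM0 : M ≠ ⊥) (hM1 : M ≠ ⊤)
    (htrans : SubspaceTransitive T (M : Set H)) :
    ∃ x : H, (M : Set H) ⊆ closure ((Set.range fun n : ℕ => (T ^ n) x) ∩ (M : Set H)) := by
  classical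
  haveI : CompleteSpace (M : Set H) := hMcl.completeSpace_coe
  haveI : Nonempty (M : Set H) := ⟨⟨0, M.zero_mem⟩⟩
  -- image of an open nonempty subset of the subtype is relatively open in M
  have himg : ∀ U : Set (M : Set H), IsOpen U → RelOpenIn (M : Set H) (Subtype.val '' U) := by
    intro U hU
    rw [isOpen_induced_iff] at hU
    obtain ⟨W, hW, rfl⟩ := hU
    refine ⟨by rintro x ⟨y, _, rfl⟩; exact y.2, W, hW, ?_⟩
    ext z
    constructor
    · rintro ⟨y, hy, rfl⟩; exact ⟨hy, y.2⟩
    · rintro ⟨hz, hzM⟩; exact ⟨⟨z, hzM⟩, hz, rfl⟩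
  -- the dense open sets
  let A : Set (M : Set H) → Set (M : Set H) := fun U =>
    ⋃ n : ℕ, {x : (M : Set H) | (T ^ n) x.1 ∈ Subtype.val '' U}
  let D : Set (M : Set H) → Set (M : Set H) := fun U => interior (A U)
  have hdense : ∀ U : Set (M : Set H), U ∈ TopologicalSpace.countableBasis (M : Set H) →
      U.Nonempty → Dense (D U) := by
    intro U hUb hUne
    have hUopen : IsOpen U := TopologicalSpace.isOpen_of_mem_countableBasis hUb
    rw [dense_iff_inter_open]
    intro W hW hWne
    obtain ⟨n, V, hVne, hVro, hVsub⟩ := htrans (Subtype.val '' U) (Subtype.val '' W)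
      (himg U hUopen) (himg W hW) (hUne.image _) (hWne.image _)
    obtain ⟨hVM, W₂, hW₂, hVeq⟩ := hVro
    obtain ⟨v, hv⟩ := hVne
    refine ⟨⟨v, hVM hv⟩, ?_, ?_⟩
    · -- in W
      have : (⟨v, hVM hv⟩ : (M : Set H)).1 ∈ Subtype.val '' W := (hVsub hv).2
      obtain ⟨w, hw, hwv⟩ := this
      have : w = ⟨v, hVM hv⟩ := Subtype.ext hwv
      exact this ▸ hw
    · -- in D U
      have hsub : (Subtype.val ⁻¹' V : Set (M : Set H)) ⊆ A U := by
        intro x hx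
        exact Set.mem_iUnion.2 ⟨n, (hVsub hx).1⟩
      have hopen : IsOpen (Subtype.val ⁻¹' V : Set (M : Set H)) := by
        rw [hVeq]
        have : (Subtype.val ⁻¹' (W₂ ∩ (M : Set H)) : Set (M : Set H)) =
            Subtype.val ⁻¹' W₂ := by
          ext x; simp [x.2]
        rw [this]
        exact hW₂.preimage continuous_subtype_val
      exact interior_maximal hsub hopen hv
  -- Baire category
  have hcount : {U ∈ TopologicalSpace.countableBasis (M : Set H) | U.Nonempty}.Countable :=
    (TopologicalSpace.countable_countableBasis _).mono (Set.sep_subset _ _)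
  have hBaire : Dense (⋂ U ∈ {U ∈ TopologicalSpace.countableBasis (M : Set H) | U.Nonempty},
      D U) := by
    refine dense_biInter_of_isOpen (fun U _ => isOpen_interior) hcount ?_
    rintro U ⟨hUb, hUne⟩
    exact hdense U hUb hUne
  obtain ⟨x, hx⟩ := hBaire.nonempty
  refine ⟨x.1, ?_⟩
  intro y hyM
  rw [mem_closure_iff]
  intro o ho hyo
  have hyX : (⟨y, hyM⟩ : (M : Set H)) ∈ (Subtype.val ⁻¹' o : Set (M : Set H)) := hyo
  obtain ⟨U, hUb, hyU, hUsub⟩ :=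
    (TopologicalSpace.isBasis_countableBasis (M : Set H)).exists_subset_of_mem_open hyX
      (ho.preimage continuous_subtype_val)
  have hxD : x ∈ D U := by
    have := Set.mem_iInter₂.1 hx U ⟨hUb, ⟨_, hyU⟩⟩
    exact this
  have hxA : x ∈ A U := interior_subset hxD
  obtain ⟨n, hn⟩ := Set.mem_iUnion.1 hxA
  obtain ⟨u, hu, huv⟩ := hn
  refine ⟨(T ^ n) x.1, ?_, ⟨n, rfl⟩, ?_⟩
  · rw [← huv]; exact hUsub hu
  · rw [← huv]; exact u.2
end
end

section
/- Characterization of subspace-transitivity: a bounded linear operator T on a Hilbert space H is M-transitive for a closed subspace M if and only if for all x, y ∈ M there exist a sequence (x_k) in M and a sequence (n_k) of natural numbers such that for all k, Tⁿᵏ(M) ⊆ M, and x_k → x and Tⁿᵏ x_k → y as k → ∞. -/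
open Filter Finset Topology

noncomputable section

/-- If a continuous linear map sends a nonempty relatively open subset of a subspace `M`
into `M`, then it sends all of `M` into `M`. -/
lemma invariance_aux {H : Type*} [NormedAddCommGroup H] [NormedSpace ℂ H]
    (S : H →L[ℂ] H) (M : Submodule ℂ H) {W : Set H} (hW : IsOpen W)
    (hne : (W ∩ (M : Set H)).Nonempty) (hSV : ∀ u ∈ W ∩ (M : Set H), S u ∈ M) :
    ∀ m ∈ M, S m ∈ M := by
  obtain ⟨v, hvW, hvM⟩ := hne
  obtain ⟨ε, hε0, hball⟩ := Metric.isOpen_iff.mp hW v hvW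
  intro m hm
  rcases eq_or_ne m 0 with rfl | hm0
  · simp only [map_zero]; exact M.zero_mem
  · have hmn : (0:ℝ) < ‖m‖ := norm_pos_iff.mpr hm0
    set c : ℂ := ((ε / (2 * ‖m‖) : ℝ) : ℂ) with hc
    have hcpos : (0:ℝ) < ε / (2 * ‖m‖) := by positivity
    have hc0 : c ≠ 0 := by
      simp only [hc, ne_eq, Complex.ofReal_eq_zero]
      exact ne_of_gt hcpos
    have hnorm : ‖c • m‖ = ε / 2 := by
      rw [norm_smul, hc, Complex.norm_real, Real.norm_eq_abs, abs_of_pos hcpos]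
      field_simp
    have hmem : v + c • m ∈ W ∩ (M : Set H) := by
      constructor
      · apply hball
        simp only [Metric.mem_ball, dist_eq_norm]
        rw [show v + c • m - v = c • m by abel, hnorm]
        linarith
      · exact M.add_mem hvM (M.smul_mem c hm)
    have h1 : S (v + c • m) ∈ M := hSV _ hmem
    have h2 : S v ∈ M := hSV v ⟨hvW, hvM⟩
    have h3 : c • S m ∈ M := by
      have : c • S m = S (v + c • m) - S v := by
        rw [map_add, map_smul]; abel
      rw [this]; exact M.sub_mem h1 h2
    have := M.smul_mem c⁻¹ h3
    rwa [smul_smul, inv_mul_cancel₀ hc0, one_smul] at this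

theorem subspace_transitive_iff_sequences
    {H : Type*} [NormedAddCommGroup H] [InnerProductSpace ℂ H] [CompleteSpace H]
    (T : H →L[ℂ] H) (M : Submodule ℂ H) (hMcl : IsClosed (M : Set H)) :
    SubspaceTransitive T (M : Set H) ↔
      ∀ x ∈ M, ∀ y ∈ M, ∃ (xs : ℕ → H) (nk : ℕ → ℕ),
        (∀ k, xs k ∈ M) ∧
        (∀ k, (⇑(T ^ nk k)) '' (M : Set H) ⊆ (M : Set H)) ∧
        Filter.Tendsto xs Filter.atTop (nhds x) ∧
        Filter.Tendsto (fun k => (T ^ nk k) (xs k)) Filter.atTop (nhds y) := by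
  constructor
  · intro hT x hx y hy
    have key : ∀ k : ℕ, ∃ n : ℕ, ∃ v : H, v ∈ M ∧
        (⇑(T ^ n)) '' (M : Set H) ⊆ (M : Set H) ∧
        dist v x < 1 / (k + 1) ∧ dist ((T ^ n) v) y < 1 / (k + 1) := by
      intro k
      have hε : (0:ℝ) < 1 / (k + 1) := by positivity
      obtain ⟨n, V, hVne, ⟨hVM, W, hW, hVW⟩, hVsub⟩ :=
        hT (Metric.ball y (1 / (k + 1)) ∩ (M : Set H))
          (Metric.ball x (1 / (k + 1)) ∩ (M : Set H))
          ⟨Set.inter_subset_right, Metric.ball y (1 / (k + 1)), Metric.isOpen_ball, rfl⟩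
          ⟨Set.inter_subset_right, Metric.ball x (1 / (k + 1)), Metric.isOpen_ball, rfl⟩
          ⟨y, Metric.mem_ball_self hε, hy⟩ ⟨x, Metric.mem_ball_self hε, hx⟩
      obtain ⟨v, hv⟩ := hVne
      have hvV := hv
      rw [hVW] at hvV
      have hinv : (⇑(T ^ n)) '' (M : Set H) ⊆ (M : Set H) := by
        rintro _ ⟨m, hm, rfl⟩
        refine invariance_aux (T ^ n) M hW ⟨v, hvV⟩ ?_ m hm
        intro u hu
        have : u ∈ V := by rw [hVW]; exact hu
        exact ((hVsub this).1).2
      have hvspec := hVsub hv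
      refine ⟨n, v, hVM hv, hinv, ?_, ?_⟩
      · have := hvspec.2.1
        simpa [Metric.mem_ball] using this
      · have := hvspec.1.1
        simpa [Metric.mem_ball] using this
    choose nk xs hxsM hinv hdx hdy using key
    refine ⟨xs, nk, hxsM, hinv, ?_, ?_⟩
    · rw [tendsto_iff_dist_tendsto_zero]
      exact squeeze_zero (fun k => dist_nonneg) (fun k => (hdx k).le)
        tendsto_one_div_add_atTop_nhds_zero_nat
    · rw [tendsto_iff_dist_tendsto_zero]
      exact squeeze_zero (fun k => dist_nonneg) (fun k => (hdy k).le)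
        tendsto_one_div_add_atTop_nhds_zero_nat
  · intro h U₁ U₂ hU₁ hU₂ hU₁ne hU₂ne
    obtain ⟨hU₁M, W₁, hW₁, rfl⟩ := hU₁
    obtain ⟨hU₂M, W₂, hW₂, rfl⟩ := hU₂
    obtain ⟨y, hyW₁, hyM⟩ := hU₁ne
    obtain ⟨x, hxW₂, hxM⟩ := hU₂ne
    obtain ⟨xs, nk, hxsM, hinv, hxs, hTxs⟩ := h x hxM y hyM
    have h1 : ∀ᶠ k in atTop, xs k ∈ W₂ := hxs (hW₂.mem_nhds hxW₂)
    have h2 : ∀ᶠ k in atTop, (T ^ nk k) (xs k) ∈ W₁ := hTxs (hW₁.mem_nhds hyW₁)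
    obtain ⟨k, hk2, hk1⟩ := (h2.and h1).exists
    refine ⟨nk k, ((⇑(T ^ nk k)) ⁻¹' W₁ ∩ W₂) ∩ (M : Set H),
      ⟨xs k, ⟨⟨hk2, hk1⟩, hxsM k⟩⟩,
      ⟨Set.inter_subset_right, (⇑(T ^ nk k)) ⁻¹' W₁ ∩ W₂,
        (hW₁.preimage (T ^ nk k).continuous).inter hW₂, rfl⟩, ?_⟩
    rintro u ⟨⟨hu1, hu2⟩, huM⟩
    exact ⟨⟨hu1, hinv k ⟨u, huM, rfl⟩⟩, hu2, huM⟩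
end
end

section
/- Necessity direction for subspace-transitivity of a bilateral forward weighted shift: let T be the bilateral forward weighted shift on ℓ²(ℤ) with positive weight sequence (wₙ)ₙ∈ℤ, M a closed subspace of ℓ²(ℤ) spanned by a subset {e_{m} : m ∈ F} of the standard basis. If T is M-transitive, then for every δ > 0 and q ∈ ℕ there exists an arbitrarily large n ∈ ℕ with Tⁿ(M) ⊆ M such that for every m ∈ F with |m| ≤ q, ∏_{k=m}^{m+n−1} w_k < δ and ∏_{k=1−m}^{n−m} 1/w_{−k} < δ. -/
open Filter Finset Topology

noncomputable section

/-- The Hilbert space `ℓ²(ℤ)`. -/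
abbrev HZ : Type := lp (fun _ : ℤ => ℂ) 2

/-- The standard orthonormal basis vectors of `ℓ²(ℤ)`. -/
def e (n : ℤ) : HZ := lp.single 2 n (1 : ℂ)

/-- The coordinate functionals on `ℓ²(ℤ)`. -/
def coord (j : ℤ) : HZ →L[ℂ] ℂ :=
  LinearMap.mkContinuous
    { toFun := fun x => x j
      map_add' := fun x y => by show (x + y : HZ) j = _; rw [lp.coeFn_add]; rfl
      map_smul' := fun c x => by show (c • x : HZ) j = _; rw [lp.coeFn_smul]; rfl } 1
    (fun x => by simpa using lp.norm_apply_le_norm two_ne_zero x j)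

@[simp] lemma coord_apply (j : ℤ) (x : HZ) : coord j x = x j := rfl

lemma e_apply (m j : ℤ) : (e m : ∀ _ : ℤ, ℂ) j = if j = m then 1 else 0 := by
  rw [e, lp.single_apply]
  split <;> simp_all

lemma dense_span_singles :
    Dense ((Submodule.span ℂ (Set.range fun p : ℤ × ℂ => lp.single 2 p.1 p.2) :
      Submodule ℂ HZ) : Set HZ) := by
  intro f
  have h := lp.hasSum_single (E := fun _ : ℤ => ℂ) (p := 2) (by norm_num) f
  refine mem_closure_of_tendsto h (Eventually.of_forall fun s => ?_)
  exact Submodule.sum_mem _ fun i _ => Submodule.subset_span ⟨(_, _), rfl⟩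

lemma single_eq_smul (i : ℤ) (c : ℂ) : lp.single 2 i c = c • e i := by
  rw [e, ← lp.single_smul]; norm_num

lemma coord_T (w : ℤ → ℝ) (T : HZ →L[ℂ] HZ)
    (hT : ∀ r : ℤ, T (e r) = (w r : ℂ) • e (r + 1)) (j : ℤ) (x : HZ) :
    (T x : ∀ _ : ℤ, ℂ) j = (w (j-1) : ℂ) * x (j-1) := by
  have : (coord j).comp T = (w (j-1) : ℂ) • coord (j-1) := by
    refine ContinuousLinearMap.ext_on dense_span_singles ?_
    rintro _ ⟨⟨i, c⟩, rfl⟩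
    simp only [ContinuousLinearMap.comp_apply, ContinuousLinearMap.smul_apply, coord_apply,
      single_eq_smul, map_smul, hT i, smul_eq_mul]
    rw [e_apply, e_apply]
    by_cases h : j = i + 1
    · subst h; rw [if_pos rfl, if_pos (by omega)]; norm_num
    · rw [if_neg h, if_neg (by omega)]; ring
  have := congrArg (fun f => f x) this
  simpa using this

lemma coord_Tpow (w : ℤ → ℝ) (T : HZ →L[ℂ] HZ)
    (hT : ∀ r : ℤ, T (e r) = (w r : ℂ) • e (r + 1)) (n : ℕ) (j : ℤ) (x : HZ) :
    ((T ^ n) x : ∀ _ : ℤ, ℂ) j = (∏ k ∈ Finset.range n, (w (j - n + k) : ℂ)) * x (j - n) := by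
  induction n generalizing x with
  | zero => simp
  | succ n ih =>
    rw [pow_succ, ContinuousLinearMap.mul_apply, ih, coord_T w T hT]
    have hp : (∏ k ∈ Finset.range (n+1), (w (j - (n+1:ℕ) + k) : ℂ)) =
        (∏ k ∈ Finset.range n, (w (j - n + k):ℂ)) * (w (j - n - 1):ℂ) := by
      rw [Finset.prod_range_succ']
      congr 1
      · exact Finset.prod_congr rfl fun k _ => by congr 2; push_cast; ring
      · congr 2; push_cast; ring
    rw [hp]
    have : j - ((n+1:ℕ):ℤ) = j - n - 1 := by push_cast; ring
    rw [this]
    ring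

lemma coord_norm_sub_le (x y : HZ) (j : ℤ) :
    ‖(x : ∀ _ : ℤ, ℂ) j - y j‖ ≤ ‖x - y‖ := by
  have := lp.norm_apply_le_norm two_ne_zero (x - y) j
  rwa [lp.coeFn_sub, Pi.sub_apply] at this

set_option maxHeartbeats 1000000 in
theorem bilateral_shift_transitive_necessity
    (w : ℤ → ℝ) (hw_pos : ∀ n, 0 < w n) (hw_bdd : ∃ C : ℝ, ∀ n, w n ≤ C)
    (T : HZ →L[ℂ] HZ)
    (hT : ∀ r : ℤ, T (e r) = (w r : ℂ) • e (r + 1))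
    (F : Set ℤ)
    (M : Set HZ) (hM : M = closure (Submodule.span ℂ (e '' F) : Set HZ))
    (htrans : SubspaceTransitive T M) :
    ∀ δ : ℝ, 0 < δ → ∀ q : ℕ, ∀ N : ℕ, ∃ n : ℕ, N ≤ n ∧
      (⇑(T ^ n)) '' M ⊆ M ∧
      ∀ m ∈ F, |m| ≤ (q : ℤ) →
        (∏ k ∈ Finset.range n, w (m + (k : ℤ))) < δ ∧
        (∏ k ∈ Finset.range n, (w (-(1 - m + (k : ℤ))))⁻¹) < δ := by
  classical
  intro δ hδ q N
  obtain ⟨C, hC⟩ := hw_bdd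
  set C' : ℝ := max C 1 with hC'def
  have hC'1 : (1:ℝ) ≤ C' := le_max_right _ _
  have hwC' : ∀ n, w n ≤ C' := fun n => (hC n).trans (le_max_left _ _)
  set Msub : Submodule ℂ HZ := (Submodule.span ℂ (e '' F)).topologicalClosure with hMsubdef
  have hMeq : M = (Msub : Set HZ) := by
    rw [hM, hMsubdef, Submodule.topologicalClosure_coe]
  have hmemM : ∀ x : HZ, x ∈ M ↔ x ∈ Msub := fun x => by rw [hMeq]; exact Iff.rfl
  have heM : ∀ m ∈ F, e m ∈ Msub :=
    fun m hm => Submodule.le_topologicalClosure _ (Submodule.subset_span ⟨m, hm, rfl⟩)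
  -- coordinates vanish off F for elements of M
  have hcoord0 : ∀ x ∈ Msub, ∀ j, j ∉ F → (x : ∀ _ : ℤ, ℂ) j = 0 := by
    intro x hx j hj
    have hker : Submodule.span ℂ (e '' F) ≤ LinearMap.ker ((coord j : HZ →L[ℂ] ℂ) : HZ →ₗ[ℂ] ℂ) := by
      rw [Submodule.span_le]
      rintro _ ⟨m, hm, rfl⟩
      have : (e m : ∀ _ : ℤ, ℂ) j = 0 := by
        rw [e_apply, if_neg]; rintro rfl; exact hj hm
      simpa [LinearMap.mem_ker] using this
    have hclosed : IsClosed ((LinearMap.ker ((coord j : HZ →L[ℂ] ℂ) : HZ →ₗ[ℂ] ℂ) : Submodule ℂ HZ) : Set HZ) :=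
      ContinuousLinearMap.isClosed_ker _
    have : x ∈ (LinearMap.ker ((coord j : HZ →L[ℂ] ℂ) : HZ →ₗ[ℂ] ℂ) : Submodule ℂ HZ) := by
      have hsub : (Msub : Set HZ) ⊆ (LinearMap.ker ((coord j : HZ →L[ℂ] ℂ) : HZ →ₗ[ℂ] ℂ) : Submodule ℂ HZ) := by
        rw [hMsubdef, Submodule.topologicalClosure_coe]
        exact closure_minimal hker hclosed
      exact hsub hx
    simpa [LinearMap.mem_ker] using this
  -- trivial case : F is empty
  by_cases hF : F = ∅
  · subst hF
    have hM0 : M = {0} := by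
      have h1 : (Submodule.span ℂ (e '' (∅ : Set ℤ)) : Set HZ) = {0} := by
        rw [Set.image_empty, Submodule.span_empty, Submodule.bot_coe]
      rw [hM, h1, closure_singleton]
    refine ⟨N, le_refl _, ?_, by simp⟩
    rw [hM0]
    rintro _ ⟨x, rfl, rfl⟩
    simp
  -- main case
  obtain ⟨m₀', hm₀'⟩ := Set.nonempty_iff_ne_empty.2 hF
  set S : Finset ℤ := (Finset.Icc (-(q:ℤ)) q).filter (· ∈ F) with hSdef
  have hSmem : ∀ m, m ∈ S ↔ m ∈ F ∧ |m| ≤ (q:ℤ) := by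
    intro m
    simp only [hSdef, Finset.mem_filter, Finset.mem_Icc, abs_le, decide_eq_true_eq]
    tauto
  obtain ⟨S', hS'ne, hS'F, hSS', hS'small⟩ :
      ∃ S' : Finset ℤ, S'.Nonempty ∧ (∀ m ∈ S', m ∈ F) ∧ S ⊆ S' ∧
        (∀ m ∈ S, ∀ m' ∈ S', |m'| ≤ (q:ℤ)) := by
    rcases S.eq_empty_or_nonempty with hS | hS
    · exact ⟨{m₀'}, Finset.singleton_nonempty _, by simpa using hm₀',
        by simp [hS], by simp [hS]⟩
    · exact ⟨S, hS, fun m hm => ((hSmem m).1 hm).1, le_refl _,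
        fun m hm m' hm' => ((hSmem m').1 hm').2⟩
  obtain ⟨m₀, hm₀⟩ := hS'ne
  -- epsilon
  set ε : ℝ := δ / (2 * (1 + δ)) with hεdef
  have hε0 : 0 < ε := by positivity
  have hεhalf : ε < 1/2 := by
    rw [hεdef, div_lt_iff₀ (by positivity)]
    nlinarith
  have hεhalfδ : ε ≤ δ / 2 := by
    rw [hεdef, div_le_div_iff₀ (by positivity) (by norm_num)]
    nlinarith
  have hεδ : ε / (1 - ε) < δ := by
    have h1 : (0:ℝ) < 1 - ε := by linarith
    rw [div_lt_iff₀ h1]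
    nlinarith
  -- N' and B
  set N' : ℕ := max N (2*q+1) with hN'def
  set B : ℝ := 2 * C' ^ N' + 1 with hBdef
  have hB1 : (1:ℝ) ≤ B := by
    have : (0:ℝ) < C' ^ N' := by positivity
    nlinarith
  -- the vector x₀
  set x₀ : HZ := ∑ m ∈ S', e m with hx₀def
  have hx₀M : x₀ ∈ Msub := Submodule.sum_mem _ fun m hm => heM m (hS'F m hm)
  have hx₀ : ∀ j, (x₀ : ∀ _ : ℤ, ℂ) j = if j ∈ S' then 1 else 0 := by
    intro j
    have : coord j x₀ = ∑ m ∈ S', coord j (e m) := map_sum _ _ _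
    rw [coord_apply] at this
    rw [this]
    simp only [coord_apply, e_apply]
    exact Finset.sum_ite_eq S' j (fun _ => 1)
  -- apply transitivity
  set U₁ : Set HZ := Metric.ball ((B:ℂ) • x₀) ε ∩ M with hU₁def
  set U₂ : Set HZ := Metric.ball x₀ ε ∩ M with hU₂def
  obtain ⟨n, V, ⟨y, hyV⟩, ⟨hVM, W, hWopen, hVW⟩, hVsub⟩ :=
    htrans U₁ U₂
      ⟨Set.inter_subset_right, _, Metric.isOpen_ball, rfl⟩
      ⟨Set.inter_subset_right, _, Metric.isOpen_ball, rfl⟩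
      ⟨(B:ℂ) • x₀, Metric.mem_ball_self hε0, (hmemM _).2 (Msub.smul_mem _ hx₀M)⟩
      ⟨x₀, Metric.mem_ball_self hε0, (hmemM _).2 hx₀M⟩
  have hy1 : (T ^ n) y ∈ U₁ := (hVsub hyV).1
  have hy2 : y ∈ U₂ := (hVsub hyV).2
  have hyM : y ∈ Msub := (hmemM _).1 hy2.2
  have hynorm : ‖y - x₀‖ < ε := by
    have := hy2.1; rwa [Metric.mem_ball, dist_eq_norm] at this
  have hTynorm : ‖(T ^ n) y - (B:ℂ) • x₀‖ < ε := by
    have := hy1.1; rwa [Metric.mem_ball, dist_eq_norm] at this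
  -- coordinate estimates
  have cB : ∀ j, ‖(y : ∀ _ : ℤ, ℂ) j - x₀ j‖ < ε :=
    fun j => lt_of_le_of_lt (coord_norm_sub_le y x₀ j) hynorm
  have cA : ∀ j, ‖((T ^ n) y : ∀ _ : ℤ, ℂ) j - (B:ℂ) * x₀ j‖ < ε := by
    intro j
    have h := lt_of_le_of_lt (coord_norm_sub_le ((T ^ n) y) ((B:ℂ) • x₀) j) hTynorm
    rwa [lp.coeFn_smul, Pi.smul_apply, smul_eq_mul] at h
  -- bound on coordinates of x₀ and products of weights
  have hx₀bd : ∀ j, ‖(x₀ : ∀ _ : ℤ, ℂ) j‖ ≤ 1 := by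
    intro j; rw [hx₀ j]; split <;> simp
  have hprodC : ∀ j : ℤ, (∏ k ∈ Finset.range n, w (j + k)) ≤ C' ^ n := by
    intro j
    calc ∏ k ∈ Finset.range n, w (j + k) ≤ ∏ k ∈ Finset.range n, C' :=
          Finset.prod_le_prod (fun k _ => (hw_pos _).le) (fun k _ => hwC' _)
      _ = C' ^ n := by rw [Finset.prod_const, Finset.card_range]
  have hprodpos : ∀ j : ℤ, 0 < ∏ k ∈ Finset.range n, w (j + k) :=
    fun j => Finset.prod_pos fun k _ => hw_pos _
  -- the key coordinate formula, real version
  have hformula : ∀ j : ℤ, ‖((T ^ n) y : ∀ _ : ℤ, ℂ) j‖ =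
      (∏ k ∈ Finset.range n, w (j - n + k)) * ‖(y : ∀ _ : ℤ, ℂ) (j - n)‖ := by
    intro j
    rw [coord_Tpow w T hT n j y, norm_mul]
    congr 1
    rw [← Complex.ofReal_prod, Complex.norm_real, Real.norm_eq_abs]
    exact abs_of_pos (Finset.prod_pos fun k _ => hw_pos _)
  -- n is large : n ≥ N'
  have hnN' : N' ≤ n := by
    by_contra hn
    push_neg at hn
    have h1 : ‖((T ^ n) y : ∀ _ : ℤ, ℂ) m₀ - (B:ℂ)‖ < ε := by
      have := cA m₀; rwa [hx₀ m₀, if_pos hm₀, mul_one] at this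
    have h2 : B - ε ≤ ‖((T ^ n) y : ∀ _ : ℤ, ℂ) m₀‖ := by
      have := norm_sub_norm_le ((T ^ n) y m₀ : ℂ) ((B:ℂ))
      have hB : ‖(B:ℂ)‖ = B := by rw [Complex.norm_real, Real.norm_eq_abs, abs_of_pos (by linarith)]
      calc B - ε ≤ ‖(B:ℂ)‖ - ‖(T ^ n) y m₀ - (B:ℂ)‖ := by
            rw [hB]; linarith [h1]
        _ ≤ ‖((T ^ n) y : ∀ _ : ℤ, ℂ) m₀‖ := by
            have := norm_sub_norm_le ((B:ℂ)) ((T ^ n) y m₀ : ℂ)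
            rw [norm_sub_rev] at this
            linarith
    have h3 : ‖(y : ∀ _ : ℤ, ℂ) (m₀ - n)‖ ≤ 2 := by
      have := cB (m₀ - n)
      have hb := hx₀bd (m₀ - n)
      have := norm_sub_norm_le (y (m₀ - n) : ℂ) (x₀ (m₀ - n) : ℂ)
      linarith
    have h4 : ‖((T ^ n) y : ∀ _ : ℤ, ℂ) m₀‖ ≤ C' ^ n * 2 := by
      rw [hformula m₀]
      exact mul_le_mul (hprodC (m₀ - n)) h3 (norm_nonneg _)
        (by positivity)
    have h5 : C' ^ n ≤ C' ^ N' := pow_le_pow_right₀ hC'1 hn.le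
    have : B - ε ≤ 2 * C' ^ N' := by nlinarith
    rw [hBdef] at this
    linarith
  have hn2q : 2 * q + 1 ≤ n := le_trans (le_max_right _ _) hnN'
  have hnN : N ≤ n := le_trans (le_max_left _ _) hnN'
  -- T^n maps M into M
  have hTM : ∀ z ∈ Msub, (T ^ n) z ∈ Msub := by
    intro z hz
    have hyW : y ∈ W := by
      have := hyV; rw [hVW] at this; exact this.1
    obtain ⟨r, hr0, hrW⟩ := Metric.isOpen_iff.1 hWopen y hyW
    rcases eq_or_ne z 0 with rfl | hz0
    · simpa using Msub.zero_mem
    · set t : ℝ := r / (2 * ‖z‖) with htdef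
      have hznorm : 0 < ‖z‖ := norm_pos_iff.2 hz0
      have ht0 : 0 < t := by positivity
      have hmem : y + (t:ℂ) • z ∈ V := by
        rw [hVW]
        constructor
        · apply hrW
          rw [Metric.mem_ball, dist_eq_norm]
          have : y + (t:ℂ) • z - y = (t:ℂ) • z := by abel
          rw [this, norm_smul]
          have : ‖(t:ℂ)‖ = t := by rw [Complex.norm_real, Real.norm_eq_abs, abs_of_pos ht0]
          rw [this, htdef]
          rw [div_mul_eq_mul_div, mul_comm 2 ‖z‖, ← div_div]
          rw [mul_div_assoc, div_self hznorm.ne', mul_one]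
          linarith
        · exact (hmemM _).2 (Msub.add_mem hyM (Msub.smul_mem _ hz))
      have h1 : (T ^ n) (y + (t:ℂ) • z) ∈ Msub := (hmemM _).1 ((hVsub hmem).1).2
      have h2 : (T ^ n) y ∈ Msub := (hmemM _).1 hy1.2
      have h3 : (t:ℂ) • (T ^ n) z ∈ Msub := by
        have : (t:ℂ) • (T ^ n) z = (T ^ n) (y + (t:ℂ) • z) - (T ^ n) y := by
          rw [map_add, map_smul]; abel
        rw [this]
        exact Msub.sub_mem h1 h2
      have : (T ^ n) z = ((t:ℝ)⁻¹ : ℂ) • ((t:ℂ) • (T ^ n) z) := by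
        rw [smul_smul]
        simp [ht0.ne']
      rw [this]
      exact Msub.smul_mem _ h3
  refine ⟨n, hnN, ?_, ?_⟩
  · rintro _ ⟨x, hx, rfl⟩
    exact (hmemM _).2 (hTM x ((hmemM _).1 hx))
  -- the estimates
  intro m hmF hmq
  have hmS : m ∈ S := (hSmem m).2 ⟨hmF, hmq⟩
  have hmS' : m ∈ S' := hSS' hmS
  have hsmall := hS'small m hmS
  constructor
  · -- first product
    have hcast : (2*q+1 : ℤ) ≤ n := by exact_mod_cast hn2q
    have hnotin : (m + n) ∉ S' := by
      intro h
      obtain ⟨ha, hb⟩ := abs_le.1 (hsmall _ h)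
      obtain ⟨hc, hd⟩ := abs_le.1 hmq
      omega
    have hA : ‖((T ^ n) y : ∀ _ : ℤ, ℂ) (m + n)‖ < ε := by
      have := cA (m + n)
      rwa [hx₀ (m + n), if_neg hnotin, mul_zero, sub_zero] at this
    have hym : 1 - ε ≤ ‖(y : ∀ _ : ℤ, ℂ) m‖ := by
      have h1 := cB m
      rw [hx₀ m, if_pos hmS'] at h1
      have := norm_sub_norm_le (1 : ℂ) (y m : ℂ)
      rw [norm_sub_rev] at this
      simp only [norm_one] at this
      linarith
    have hform := hformula (m + n)
    have harg : ∀ k : ℕ, m + (n:ℤ) - n + k = m + k := by intro k; ring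
    have hprodeq : (∏ k ∈ Finset.range n, w (m + (n:ℤ) - n + k)) =
        ∏ k ∈ Finset.range n, w (m + k) :=
      Finset.prod_congr rfl fun k _ => by rw [harg k]
    rw [hprodeq] at hform
    have hy0 : 0 ≤ ‖(y : ∀ _ : ℤ, ℂ) (m + (n:ℤ) - n)‖ := norm_nonneg _
    have harg2 : m + (n:ℤ) - n = m := by ring
    rw [harg2] at hform
    have hP := hprodpos m
    have key : (∏ k ∈ Finset.range n, w (m + k)) * (1 - ε) < ε := by
      calc (∏ k ∈ Finset.range n, w (m + k)) * (1 - ε)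
          ≤ (∏ k ∈ Finset.range n, w (m + k)) * ‖(y : ∀ _ : ℤ, ℂ) m‖ := by
            apply mul_le_mul_of_nonneg_left hym hP.le
        _ = ‖((T ^ n) y : ∀ _ : ℤ, ℂ) (m + n)‖ := hform.symm
        _ < ε := hA
    have h1ε : (0:ℝ) < 1 - ε := by linarith
    exact lt_trans ((lt_div_iff₀ h1ε).2 key) hεδ
  · -- second product
    have hcast : (2*q+1 : ℤ) ≤ n := by exact_mod_cast hn2q
    have hnotin : (m - n) ∉ S' := by
      intro h
      obtain ⟨ha, hb⟩ := abs_le.1 (hsmall _ h)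
      obtain ⟨hc, hd⟩ := abs_le.1 hmq
      omega
    have hA : 1 - ε ≤ ‖((T ^ n) y : ∀ _ : ℤ, ℂ) m‖ := by
      have h := cA m
      rw [hx₀ m, if_pos hmS', mul_one] at h
      have hBnorm : ‖(B:ℂ)‖ = B := by rw [Complex.norm_real, Real.norm_eq_abs, abs_of_pos (by linarith)]
      have h2 := norm_sub_norm_le ((B:ℂ)) (((T ^ n) y : ∀ _ : ℤ, ℂ) m)
      rw [norm_sub_rev] at h2
      rw [hBnorm] at h2
      linarith
    have hyB : ‖(y : ∀ _ : ℤ, ℂ) (m - n)‖ < ε := by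
      have h := cB (m - n)
      rwa [hx₀ (m - n), if_neg hnotin, sub_zero] at h
    set P : ℝ := ∏ k ∈ Finset.range n, w (m - n + k) with hPdef
    have hP0 : 0 < P := Finset.prod_pos fun k _ => hw_pos _
    have hPbig : 1 - ε ≤ P * ‖(y : ∀ _ : ℤ, ℂ) (m - n)‖ := by
      rw [← hformula m]; exact hA
    have h2 : 1 - ε < P * ε :=
      lt_of_le_of_lt hPbig (mul_lt_mul_of_pos_left hyB hP0)
    have hPgt : (1 - ε) / ε < P := (div_lt_iff₀ hε0).2 (by linarith)
    have h1ε : (0:ℝ) < 1 - ε := by linarith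
    have hPinv : P⁻¹ < ε / (1 - ε) := by
      have hdpos : (0:ℝ) < (1 - ε) / ε := by positivity
      have := inv_strictAnti₀ hdpos hPgt
      rwa [inv_div] at this
    have htarget : (∏ k ∈ Finset.range n, (w (-(1 - m + (k:ℤ))))⁻¹) = P⁻¹ := by
      rw [Finset.prod_inv_distrib]
      congr 1
      have h3 : (∏ k ∈ Finset.range n, w (-(1 - m + (k:ℤ)))) =
          ∏ k ∈ Finset.range n, w (m - 1 - k) :=
        Finset.prod_congr rfl fun k _ => by congr 1; ring
      have hre := Finset.prod_range_reflect (fun k : ℕ => w (m - n + k)) n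
      have h4 : (∏ j ∈ Finset.range n, w (m - n + ((n - 1 - j : ℕ) : ℤ))) =
          ∏ j ∈ Finset.range n, w (m - 1 - j) := by
        refine Finset.prod_congr rfl fun j hj => ?_
        have hj' := Finset.mem_range.1 hj
        congr 1
        have h5 : ((n - 1 - j : ℕ) : ℤ) = (n:ℤ) - 1 - j := by omega
        rw [h5]; ring
      rw [h3, ← h4, hPdef]
      exact hre
    rw [htarget]
    exact lt_trans hPinv hεδ
end
end

section
/- Propagation of convergence to zero along the basis of an invariant subspace: let T be an invertible bilateral weighted shift on ℓ²(ℤ) with positive weights, M a closed subspace spanned by basis vectors {e_m : m ∈ F}, and (n_k) an increasing sequence of positive integers with n_k → ∞ and Tⁿᵏ(M) ⊆ M for all k. If there exists m_i ∈ F with Tⁿᵏ e_{m_i} → 0 as k → ∞, then Tⁿᵏ e_{m_r} → 0 for every m_r ∈ F. -/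
open Filter Finset Topology

noncomputable section

lemma norm_e (n : ℤ) : ‖e n‖ = 1 := by
  have := lp.norm_single (p := 2) (E := fun _ : ℤ => ℂ) (by norm_num) n (1:ℂ)
  simpa [e] using this

theorem invariant_subspace_basis_convergence
    (w : ℤ → ℝ) (hw_pos : ∀ n, 0 < w n) (hw_bdd : ∃ C : ℝ, ∀ n, w n ≤ C)
    (hw_below : ∃ b : ℝ, 0 < b ∧ ∀ n, b ≤ w n)
    (T : HZ →L[ℂ] HZ)
    (hT : ∀ r : ℤ, T (e r) = (w r : ℂ) • e (r + 1))
    (F : Set ℤ)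
    (M : Set HZ) (hM : M = closure (Submodule.span ℂ (e '' F) : Set HZ))
    (nk : ℕ → ℕ) (hnk_mono : StrictMono nk)
    (hnk_pos : ∀ k, 0 < nk k)
    (hinv : ∀ k, (⇑(T ^ nk k)) '' M ⊆ M)
    (mi : ℤ) (hmi : mi ∈ F)
    (hconv : Filter.Tendsto (fun k => (T ^ nk k) (e mi)) Filter.atTop (nhds 0)) :
    ∀ mr ∈ F, Filter.Tendsto (fun k => (T ^ nk k) (e mr)) Filter.atTop (nhds 0) := by
  obtain ⟨C, hC⟩ := hw_bdd
  obtain ⟨b, hb, hbw⟩ := hw_below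
  have hC0 : 0 < C := lt_of_lt_of_le (hw_pos 0) (hC 0)
  set P : ℤ → ℕ → ℝ := fun r n => ∏ j ∈ Finset.range n, w (r + j) with hPdef
  have hPpos : ∀ r n, 0 < P r n := fun r n =>
    Finset.prod_pos (fun j _ => hw_pos _)
  -- the action of T^n on basis vectors
  have hTn : ∀ (n : ℕ) (r : ℤ), (T ^ n) (e r) = ((P r n : ℝ) : ℂ) • e (r + n) := by
    intro n
    induction n with
    | zero => intro r; simp [hPdef]
    | succ n ih =>
      intro r
      have hstep : (T ^ (n + 1)) (e r) = (T ^ n) (T (e r)) := by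
        rw [pow_succ]; rfl
      rw [hstep, hT r, map_smul, ih (r + 1), smul_smul]
      have hprod : P r (n + 1) = w r * P (r + 1) n := by
        simp only [hPdef, Finset.prod_range_succ', Nat.cast_add, Nat.cast_zero,
          Nat.cast_one, add_zero]
        rw [mul_comm]
        congr 1
        exact Finset.prod_congr rfl (fun j _ => by congr 1; ring)
      have hidx : r + 1 + (n : ℤ) = r + ((n : ℕ) + 1 : ℕ) := by push_cast; ring
      rw [hprod, hidx]
      push_cast
      ring_nf
  -- norm of T^n (e r)
  have hnorm : ∀ (n : ℕ) (r : ℤ), ‖(T ^ n) (e r)‖ = P r n := by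
    intro n r
    rw [hTn n r, norm_smul, norm_e, mul_one]
    simp [abs_of_pos (hPpos r n)]
  -- shift identity
  have key : ∀ (r : ℤ) (n : ℕ), P (r + 1) n * w r = P r n * w (r + n) := by
    intro r n
    have h1 : P r (n + 1) = w r * P (r + 1) n := by
      simp only [hPdef, Finset.prod_range_succ', Nat.cast_add, Nat.cast_zero,
        Nat.cast_one, add_zero]
      rw [mul_comm]
      congr 1
      exact Finset.prod_congr rfl (fun j _ => by congr 1; ring)
    have h2 : P r (n + 1) = P r n * w (r + n) := by
      simp only [hPdef, Finset.prod_range_succ]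
    rw [mul_comm, ← h1, h2]
  have shift : ∀ (d : ℕ) (r : ℤ) (n : ℕ),
      P (r + d) n * (∏ t ∈ Finset.range d, w (r + t)) =
      P r n * (∏ t ∈ Finset.range d, w (r + n + t)) := by
    intro d
    induction d with
    | zero => intro r n; simp
    | succ d ih =>
      intro r n
      rw [Finset.prod_range_succ, Finset.prod_range_succ]
      have h1 : r + ((d : ℕ) + 1 : ℕ) = (r + d) + 1 := by push_cast; ring
      have h2 : P ((r + d) + 1) n * w (r + d) = P (r + d) n * w (r + d + n) := key (r + d) n
      calc P (r + ((d : ℕ) + 1 : ℕ)) n * ((∏ t ∈ Finset.range d, w (r + t)) * w (r + d))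
          = (P ((r + d) + 1) n * w (r + d)) * (∏ t ∈ Finset.range d, w (r + t)) := by
            rw [h1]; ring
        _ = (P (r + d) n * w (r + d + n)) * (∏ t ∈ Finset.range d, w (r + t)) := by rw [h2]
        _ = (P (r + d) n * (∏ t ∈ Finset.range d, w (r + t))) * w (r + d + n) := by ring
        _ = (P r n * (∏ t ∈ Finset.range d, w (r + n + t))) * w (r + d + n) := by rw [ih r n]
        _ = P r n * ((∏ t ∈ Finset.range d, w (r + n + t)) * w (r + n + d)) := by
            have : r + d + n = r + n + d := by ring
            rw [this]; ring
  -- bounds on the auxiliary products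
  have prod_le : ∀ (d : ℕ) (r : ℤ), (∏ t ∈ Finset.range d, w (r + t)) ≤ C ^ d := by
    intro d r
    calc (∏ t ∈ Finset.range d, w (r + t)) ≤ ∏ t ∈ Finset.range d, C :=
          Finset.prod_le_prod (fun t _ => (hw_pos _).le) (fun t _ => hC _)
      _ = C ^ d := by simp
  have prod_ge : ∀ (d : ℕ) (r : ℤ), b ^ d ≤ (∏ t ∈ Finset.range d, w (r + t)) := by
    intro d r
    calc b ^ d = ∏ t ∈ Finset.range d, b := by simp
      _ ≤ ∏ t ∈ Finset.range d, w (r + t) :=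
          Finset.prod_le_prod (fun t _ => hb.le) (fun t _ => hbw _)
  -- from X * u = Y * v, b^d ≤ u, v ≤ C^d : X ≤ (C/b)^d * Y
  have abstract : ∀ (d : ℕ) (X Y u v : ℝ), 0 < Y → b ^ d ≤ u → v ≤ C ^ d →
      X * u = Y * v → X ≤ (C / b) ^ d * Y := by
    intro d X Y u v hY hu hv hXY
    have hbd : (0:ℝ) < b ^ d := pow_pos hb d
    have hupos : 0 < u := lt_of_lt_of_le hbd hu
    have h1 : X * u ≤ Y * C ^ d := by
      rw [hXY]
      exact mul_le_mul_of_nonneg_left hv hY.le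
    have h2 : X ≤ Y * C ^ d / u := (le_div_iff₀ hupos).2 h1
    calc X ≤ Y * C ^ d / u := h2
      _ ≤ Y * C ^ d / b ^ d := by gcongr <;> positivity
      _ = (C / b) ^ d * Y := by rw [div_pow]; ring
  -- the comparison bound
  intro mr _
  set d : ℕ := (mr - mi).natAbs with hd
  set K : ℝ := (C / b) ^ d with hK
  have hbound : ∀ n : ℕ, P mr n ≤ K * P mi n := by
    intro n
    rcases le_or_gt mi mr with h | h
    · have hdd : mr = mi + (d : ℤ) := by
        rw [hd, Int.natAbs_of_nonneg (by omega)]; ring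
      rw [hdd]
      exact abstract d _ _ _ _ (hPpos mi n) (prod_ge d mi) (prod_le d (mi + n))
        (shift d mi n)
    · have hdd : mi = mr + (d : ℤ) := by
        have : (d : ℤ) = mi - mr := by
          rw [hd]
          omega
        omega
      have := shift d mr n
      rw [← hdd] at this
      exact abstract d _ _ _ _ (hPpos mi n) (prod_ge d (mr + n)) (prod_le d mr)
        this.symm
  -- conclude
  have hnconv : Tendsto (fun k => P mi (nk k)) atTop (nhds 0) := by
    have := hconv.norm
    simp only [norm_zero] at this
    simpa only [hnorm] using this
  have hKconv : Tendsto (fun k => K * P mi (nk k)) atTop (nhds 0) := by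
    simpa using hnconv.const_mul K
  have hmrconv : Tendsto (fun k => P mr (nk k)) atTop (nhds 0) :=
    squeeze_zero (fun k => (hPpos mr (nk k)).le) (fun k => hbound (nk k)) hKconv
  rw [tendsto_zero_iff_norm_tendsto_zero]
  simpa only [hnorm] using hmrconv
end
end
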